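/- The pseudo-rotation generator J = A₄ = pt∂_x + (x/t)∂_p + 2xp commutes with each of K₋ = A₁, K₀ = A₂, K₊ = A₃. -/

import Mathlib

noncomputable def pdT (Q : ℝ → ℝ → ℝ → ℝ) (x p t : ℝ) : ℝ := deriv (fun s => Q x p s) t
noncomputable def pdX (Q : ℝ → ℝ → ℝ → ℝ) (x p t : ℝ) : ℝ := deriv (fun z => Q z p t) x
noncomputable def pdP (Q : ℝ → ℝ → ℝ → ℝ) (x p t : ℝ) : ℝ := deriv (fun z => Q x z t) p
noncomputable def pdXX (Q : ℝ → ℝ → ℝ → ℝ) (x p t : ℝ) : ℝ :=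
  deriv (fun y => deriv (fun z => Q z p t) y) x
noncomputable def pdPP (Q : ℝ → ℝ → ℝ → ℝ) (x p t : ℝ) : ℝ :=
  deriv (fun y => deriv (fun z => Q x z t) y) p

/-- The pseudo-diffusion operator `L = ∂_t - (1/4)∂_xx + (1/(4t²))∂_pp`. -/
noncomputable def Lop (Q : ℝ → ℝ → ℝ → ℝ) (x p t : ℝ) : ℝ :=
  pdT Q x p t - (1/4) * pdXX Q x p t + 1/(4*t^2) * pdPP Q x p t

/-- Smoothness on the region `t > 0`. -/
def SmoothPos (Q : ℝ → ℝ → ℝ → ℝ) : Prop :=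
  ContDiffOn ℝ (⊤ : ℕ∞) (fun v : ℝ × ℝ × ℝ => Q v.1 v.2.1 v.2.2) {v : ℝ × ℝ × ℝ | 0 < v.2.2}

/-- `K₋ = A₁ = ∂_t - (p/t)∂_p - p² - 1/(2t)`. -/
noncomputable def Kminus (Q : ℝ → ℝ → ℝ → ℝ) : ℝ → ℝ → ℝ → ℝ :=
  fun x p t => pdT Q x p t - (p/t) * pdP Q x p t - (p^2 + 1/(2*t)) * Q x p t

/-- `K₀ = A₂ = 2t∂_t + x∂_x - p∂_p`. -/
noncomputable def Kzero (Q : ℝ → ℝ → ℝ → ℝ) : ℝ → ℝ → ℝ → ℝ :=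
  fun x p t => 2*t * pdT Q x p t + x * pdX Q x p t - p * pdP Q x p t

/-- `K₊ = A₃ = t²∂_t + tx∂_x + x² + t/2`. -/
noncomputable def Kplus (Q : ℝ → ℝ → ℝ → ℝ) : ℝ → ℝ → ℝ → ℝ :=
  fun x p t => t^2 * pdT Q x p t + t*x * pdX Q x p t + (x^2 + t/2) * Q x p t

/-- The pseudo-rotation `J = A₄ = pt∂_x + (x/t)∂_p + 2xp`. -/
noncomputable def Jop (Q : ℝ → ℝ → ℝ → ℝ) : ℝ → ℝ → ℝ → ℝ :=
  fun x p t => p*t * pdX Q x p t + (x/t) * pdP Q x p t + 2*x*p*Q x p t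

namespace Stmt11Aux

open Filter

/-- The uncurried version of a function of three real variables. -/
def Fc (Q : ℝ → ℝ → ℝ → ℝ) : ℝ × ℝ × ℝ → ℝ := fun v => Q v.1 v.2.1 v.2.2

/-- The open region `t > 0`. -/
def Uset : Set (ℝ × ℝ × ℝ) := {v : ℝ × ℝ × ℝ | 0 < v.2.2}

lemma isOpen_U : IsOpen Uset :=
  isOpen_lt continuous_const (continuous_snd.comp continuous_snd)

lemma mem_U {x p t : ℝ} (ht : 0 < t) : ((x, p, t) : ℝ × ℝ × ℝ) ∈ Uset := ht

variable {Q : ℝ → ℝ → ℝ → ℝ}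

lemma hasFDerivAt_of_smooth (hQ : SmoothPos Q) {v : ℝ × ℝ × ℝ} (hv : v ∈ Uset) :
    HasFDerivAt (Fc Q) (fderiv ℝ (Fc Q) v) v :=
  ((hQ.contDiffAt (isOpen_U.mem_nhds hv)).differentiableAt (by simp)).hasFDerivAt

lemma smooth_fderiv (hQ : SmoothPos Q) : ContDiffOn ℝ (⊤ : ℕ∞) (fderiv ℝ (Fc Q)) Uset :=
  ContDiffOn.fderiv_of_isOpen hQ isOpen_U (by simp)

lemma hasFDerivAt_fderiv (hQ : SmoothPos Q) {v : ℝ × ℝ × ℝ} (hv : v ∈ Uset) :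
    HasFDerivAt (fderiv ℝ (Fc Q)) (fderiv ℝ (fderiv ℝ (Fc Q)) v) v :=
  (((smooth_fderiv hQ).contDiffAt (isOpen_U.mem_nhds hv)).differentiableAt (by simp)).hasFDerivAt

/-! ### First-order slice derivatives -/

lemma pdX_eq (hQ : SmoothPos Q) {x p t : ℝ} (ht : 0 < t) :
    pdX Q x p t = fderiv ℝ (Fc Q) (x, p, t) (1, 0, 0) := by
  have hg : HasDerivAt (fun z : ℝ => ((z, p, t) : ℝ × ℝ × ℝ)) (1, 0, 0) x :=
    (hasDerivAt_id x).prodMk (hasDerivAt_const x (p, t))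
  exact ((hasFDerivAt_of_smooth hQ (mem_U ht)).comp_hasDerivAt x hg).deriv

lemma pdP_eq (hQ : SmoothPos Q) {x p t : ℝ} (ht : 0 < t) :
    pdP Q x p t = fderiv ℝ (Fc Q) (x, p, t) (0, 1, 0) := by
  have hg : HasDerivAt (fun z : ℝ => ((x, z, t) : ℝ × ℝ × ℝ)) (0, 1, 0) p :=
    (hasDerivAt_const p x).prodMk ((hasDerivAt_id p).prodMk (hasDerivAt_const p t))
  exact ((hasFDerivAt_of_smooth hQ (mem_U ht)).comp_hasDerivAt p hg).deriv

lemma pdT_eq (hQ : SmoothPos Q) {x p t : ℝ} (ht : 0 < t) :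
    pdT Q x p t = fderiv ℝ (Fc Q) (x, p, t) (0, 0, 1) := by
  have hg : HasDerivAt (fun s : ℝ => ((x, p, s) : ℝ × ℝ × ℝ)) (0, 0, 1) t :=
    (hasDerivAt_const t x).prodMk ((hasDerivAt_const t p).prodMk (hasDerivAt_id t))
  exact ((hasFDerivAt_of_smooth hQ (mem_U ht)).comp_hasDerivAt t hg).deriv

lemma sliceX (hQ : SmoothPos Q) {x p t : ℝ} (ht : 0 < t) :
    HasDerivAt (fun z => Q z p t) (pdX Q x p t) x := by
  rw [pdX_eq hQ ht]
  have hg : HasDerivAt (fun z : ℝ => ((z, p, t) : ℝ × ℝ × ℝ)) (1, 0, 0) x :=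
    (hasDerivAt_id x).prodMk (hasDerivAt_const x (p, t))
  exact (hasFDerivAt_of_smooth hQ (mem_U ht)).comp_hasDerivAt x hg

lemma sliceP (hQ : SmoothPos Q) {x p t : ℝ} (ht : 0 < t) :
    HasDerivAt (fun z => Q x z t) (pdP Q x p t) p := by
  rw [pdP_eq hQ ht]
  have hg : HasDerivAt (fun z : ℝ => ((x, z, t) : ℝ × ℝ × ℝ)) (0, 1, 0) p :=
    (hasDerivAt_const p x).prodMk ((hasDerivAt_id p).prodMk (hasDerivAt_const p t))
  exact (hasFDerivAt_of_smooth hQ (mem_U ht)).comp_hasDerivAt p hg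

lemma sliceT (hQ : SmoothPos Q) {x p t : ℝ} (ht : 0 < t) :
    HasDerivAt (fun s => Q x p s) (pdT Q x p t) t := by
  rw [pdT_eq hQ ht]
  have hg : HasDerivAt (fun s : ℝ => ((x, p, s) : ℝ × ℝ × ℝ)) (0, 0, 1) t :=
    (hasDerivAt_const t x).prodMk ((hasDerivAt_const t p).prodMk (hasDerivAt_id t))
  exact (hasFDerivAt_of_smooth hQ (mem_U ht)).comp_hasDerivAt t hg

/-! ### Smoothness of the partial derivatives -/

lemma smooth_dir (hQ : SmoothPos Q) (w : ℝ × ℝ × ℝ) :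
    ContDiffOn ℝ (⊤ : ℕ∞) (fun v => fderiv ℝ (Fc Q) v w) Uset :=
  (ContinuousLinearMap.apply ℝ ℝ w).contDiff.comp_contDiffOn (smooth_fderiv hQ)

lemma smoothPos_pdX (hQ : SmoothPos Q) : SmoothPos (pdX Q) :=
  (smooth_dir hQ (1, 0, 0)).congr fun v hv => pdX_eq hQ (hv : (0:ℝ) < v.2.2)

lemma smoothPos_pdP (hQ : SmoothPos Q) : SmoothPos (pdP Q) :=
  (smooth_dir hQ (0, 1, 0)).congr fun v hv => pdP_eq hQ (hv : (0:ℝ) < v.2.2)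

lemma smoothPos_pdT (hQ : SmoothPos Q) : SmoothPos (pdT Q) :=
  (smooth_dir hQ (0, 0, 1)).congr fun v hv => pdT_eq hQ (hv : (0:ℝ) < v.2.2)

/-! ### Clairaut symmetry -/

lemma snd_symm (hQ : SmoothPos Q) {x p t : ℝ} (ht : 0 < t) (v w : ℝ × ℝ × ℝ) :
    fderiv ℝ (fderiv ℝ (Fc Q)) (x, p, t) v w
      = fderiv ℝ (fderiv ℝ (Fc Q)) (x, p, t) w v := by
  have hev : ∀ᶠ y in nhds ((x, p, t) : ℝ × ℝ × ℝ),
      HasFDerivAt (Fc Q) (fderiv ℝ (Fc Q) y) y := by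
    filter_upwards [isOpen_U.mem_nhds (mem_U ht)] with y hy
      using hasFDerivAt_of_smooth hQ hy
  exact second_derivative_symmetric_of_eventually hev (hasFDerivAt_fderiv hQ (mem_U ht)) v w

/-- On `Uset`, `Fc (pd· Q)` agrees with the directional derivative of `Fc Q`,
so its `fderiv` applied to any vector is the second derivative. -/
lemma fderiv_dir_eq (hQ : SmoothPos Q) {x p t : ℝ} (ht : 0 < t)
    {R : ℝ → ℝ → ℝ → ℝ} (w : ℝ × ℝ × ℝ)
    (hR : ∀ x' p' t' : ℝ, 0 < t' → R x' p' t' = fderiv ℝ (Fc Q) (x', p', t') w)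
    (u : ℝ × ℝ × ℝ) :
    fderiv ℝ (Fc R) (x, p, t) u = fderiv ℝ (fderiv ℝ (Fc Q)) (x, p, t) u w := by
  have heq : Fc R =ᶠ[nhds ((x, p, t) : ℝ × ℝ × ℝ)] fun v => fderiv ℝ (Fc Q) v w := by
    filter_upwards [isOpen_U.mem_nhds (mem_U ht)] with y hy
      using hR y.1 y.2.1 y.2.2 hy
  rw [heq.fderiv_eq]
  have hcomp : HasFDerivAt (fun v => fderiv ℝ (Fc Q) v w)
      ((ContinuousLinearMap.apply ℝ ℝ w).comp (fderiv ℝ (fderiv ℝ (Fc Q)) (x, p, t)))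
      (x, p, t) :=
    (ContinuousLinearMap.apply ℝ ℝ w).hasFDerivAt.comp _ (hasFDerivAt_fderiv hQ (mem_U ht))
  rw [hcomp.fderiv]
  rfl

/-- Mixed partials commute: `∂t∂x = ∂x∂t`. -/
lemma comm_TX (hQ : SmoothPos Q) {x p t : ℝ} (ht : 0 < t) :
    pdT (pdX Q) x p t = pdX (pdT Q) x p t := by
  have h1 : pdT (pdX Q) x p t
      = fderiv ℝ (fderiv ℝ (Fc Q)) (x, p, t) (0, 0, 1) (1, 0, 0) := by
    rw [pdT_eq (smoothPos_pdX hQ) ht]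
    exact fderiv_dir_eq hQ ht (1,0,0) (fun x' p' t' ht' => pdX_eq hQ ht') (0,0,1)
  have h2 : pdX (pdT Q) x p t
      = fderiv ℝ (fderiv ℝ (Fc Q)) (x, p, t) (1, 0, 0) (0, 0, 1) := by
    rw [pdX_eq (smoothPos_pdT hQ) ht]
    exact fderiv_dir_eq hQ ht (0,0,1) (fun x' p' t' ht' => pdT_eq hQ ht') (1,0,0)
  rw [h1, h2, snd_symm hQ ht]

/-- Mixed partials commute: `∂t∂p = ∂p∂t`. -/
lemma comm_TP (hQ : SmoothPos Q) {x p t : ℝ} (ht : 0 < t) :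
    pdT (pdP Q) x p t = pdP (pdT Q) x p t := by
  have h1 : pdT (pdP Q) x p t
      = fderiv ℝ (fderiv ℝ (Fc Q)) (x, p, t) (0, 0, 1) (0, 1, 0) := by
    rw [pdT_eq (smoothPos_pdP hQ) ht]
    exact fderiv_dir_eq hQ ht (0,1,0) (fun x' p' t' ht' => pdP_eq hQ ht') (0,0,1)
  have h2 : pdP (pdT Q) x p t
      = fderiv ℝ (fderiv ℝ (Fc Q)) (x, p, t) (0, 1, 0) (0, 0, 1) := by
    rw [pdP_eq (smoothPos_pdT hQ) ht]
    exact fderiv_dir_eq hQ ht (0,0,1) (fun x' p' t' ht' => pdT_eq hQ ht') (0,1,0)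
  rw [h1, h2, snd_symm hQ ht]

/-- Mixed partials commute: `∂p∂x = ∂x∂p`. -/
lemma comm_PX (hQ : SmoothPos Q) {x p t : ℝ} (ht : 0 < t) :
    pdP (pdX Q) x p t = pdX (pdP Q) x p t := by
  have h1 : pdP (pdX Q) x p t
      = fderiv ℝ (fderiv ℝ (Fc Q)) (x, p, t) (0, 1, 0) (1, 0, 0) := by
    rw [pdP_eq (smoothPos_pdX hQ) ht]
    exact fderiv_dir_eq hQ ht (1,0,0) (fun x' p' t' ht' => pdX_eq hQ ht') (0,1,0)
  have h2 : pdX (pdP Q) x p t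
      = fderiv ℝ (fderiv ℝ (Fc Q)) (x, p, t) (1, 0, 0) (0, 1, 0) := by
    rw [pdX_eq (smoothPos_pdP hQ) ht]
    exact fderiv_dir_eq hQ ht (0,1,0) (fun x' p' t' ht' => pdP_eq hQ ht') (1,0,0)
  rw [h1, h2, snd_symm hQ ht]

end Stmt11Aux

/-- `J` commutes with each of `K₋, K₀, K₊`. -/
theorem stmt11 (Q : ℝ → ℝ → ℝ → ℝ) (hQ : SmoothPos Q) :
    (∀ x p t : ℝ, 0 < t → Jop (Kminus Q) x p t = Kminus (Jop Q) x p t) ∧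
    (∀ x p t : ℝ, 0 < t → Jop (Kzero Q) x p t = Kzero (Jop Q) x p t) ∧
    (∀ x p t : ℝ, 0 < t → Jop (Kplus Q) x p t = Kplus (Jop Q) x p t) := by
  have hT := Stmt11Aux.smoothPos_pdT hQ
  have hXs := Stmt11Aux.smoothPos_pdX hQ
  have hPs := Stmt11Aux.smoothPos_pdP hQ
  refine ⟨fun x p t ht => ?_, fun x p t ht => ?_, fun x p t ht => ?_⟩
  ·
    have ht' : t ≠ 0 := ne_of_gt ht
    have sXQ := Stmt11Aux.sliceX hQ (x := x) (p := p) ht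
    have sPQ := Stmt11Aux.sliceP hQ (x := x) (p := p) ht
    have sTQ := Stmt11Aux.sliceT hQ (x := x) (p := p) ht
    have sXT := Stmt11Aux.sliceX hT (x := x) (p := p) ht
    have sPT := Stmt11Aux.sliceP hT (x := x) (p := p) ht
    have sXX := Stmt11Aux.sliceX hXs (x := x) (p := p) ht
    have sPX := Stmt11Aux.sliceP hXs (x := x) (p := p) ht
    have sTX := Stmt11Aux.sliceT hXs (x := x) (p := p) ht
    have sXP := Stmt11Aux.sliceX hPs (x := x) (p := p) ht
    have sPP := Stmt11Aux.sliceP hPs (x := x) (p := p) ht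
    have sTP := Stmt11Aux.sliceT hPs (x := x) (p := p) ht
    have hJt : HasDerivAt (fun s => Jop Q x p s) _ t :=
      ((((hasDerivAt_id' t).const_mul p).mul sTX).add
        (((hasDerivAt_const t x).div (hasDerivAt_id' t) ht').mul sTP)).add
        (sTQ.const_mul (2*x*p))
    have eJt : pdT (Jop Q) x p t = _ := hJt.deriv
    have hJx : HasDerivAt (fun z => Jop Q z p t) _ x :=
      ((sXX.const_mul (p*t)).add
        (((hasDerivAt_id' x).div_const t).mul sXP)).add
        ((((hasDerivAt_id' x).const_mul 2).mul_const p).mul sXQ)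
    have eJx : pdX (Jop Q) x p t = _ := hJx.deriv
    have hJp : HasDerivAt (fun z => Jop Q x z t) _ p :=
      ((((hasDerivAt_id' p).mul_const t).mul sPX).add
        (sPP.const_mul (x/t))).add
        (((hasDerivAt_id' p).const_mul (2*x)).mul sPQ)
    have eJp : pdP (Jop Q) x p t = _ := hJp.deriv
    have EJ : Jop Q x p t
        = p*t * pdX Q x p t + (x/t) * pdP Q x p t + 2*x*p*Q x p t := rfl
    have cTX := Stmt11Aux.comm_TX hQ (x := x) (p := p) ht
    have cTP := Stmt11Aux.comm_TP hQ (x := x) (p := p) ht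
    have cPX := Stmt11Aux.comm_PX hQ (x := x) (p := p) ht
    have hKx : HasDerivAt (fun z => Kminus Q z p t) _ x :=
      (sXT.sub (sXP.const_mul (p/t))).sub (sXQ.const_mul (p^2 + 1/(2*t)))
    have eKx : pdX (Kminus Q) x p t = _ := hKx.deriv
    have hKp : HasDerivAt (fun z => Kminus Q x z t) _ p :=
      (sPT.sub (((hasDerivAt_id' p).div_const t).mul sPP)).sub
        (((hasDerivAt_pow 2 p).add_const (1/(2*t))).mul sPQ)
    have eKp : pdP (Kminus Q) x p t = _ := hKp.deriv
    have EK : Kminus Q x p t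
        = pdT Q x p t - (p/t) * pdP Q x p t - (p^2 + 1/(2*t)) * Q x p t := rfl
    show p*t * pdX (Kminus Q) x p t + (x/t) * pdP (Kminus Q) x p t
          + 2*x*p*(Kminus Q x p t)
        = pdT (Jop Q) x p t - (p/t) * pdP (Jop Q) x p t
          - (p^2 + 1/(2*t)) * (Jop Q x p t)
    rw [eKx, eKp, eJt, eJp, EK, EJ, cTX, cTP, cPX]
    simp only [Pi.div_apply]
    field_simp
    ring
  ·
    have ht' : t ≠ 0 := ne_of_gt ht
    have sXQ := Stmt11Aux.sliceX hQ (x := x) (p := p) ht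
    have sPQ := Stmt11Aux.sliceP hQ (x := x) (p := p) ht
    have sTQ := Stmt11Aux.sliceT hQ (x := x) (p := p) ht
    have sXT := Stmt11Aux.sliceX hT (x := x) (p := p) ht
    have sPT := Stmt11Aux.sliceP hT (x := x) (p := p) ht
    have sXX := Stmt11Aux.sliceX hXs (x := x) (p := p) ht
    have sPX := Stmt11Aux.sliceP hXs (x := x) (p := p) ht
    have sTX := Stmt11Aux.sliceT hXs (x := x) (p := p) ht
    have sXP := Stmt11Aux.sliceX hPs (x := x) (p := p) ht
    have sPP := Stmt11Aux.sliceP hPs (x := x) (p := p) ht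
    have sTP := Stmt11Aux.sliceT hPs (x := x) (p := p) ht
    have hJt : HasDerivAt (fun s => Jop Q x p s) _ t :=
      ((((hasDerivAt_id' t).const_mul p).mul sTX).add
        (((hasDerivAt_const t x).div (hasDerivAt_id' t) ht').mul sTP)).add
        (sTQ.const_mul (2*x*p))
    have eJt : pdT (Jop Q) x p t = _ := hJt.deriv
    have hJx : HasDerivAt (fun z => Jop Q z p t) _ x :=
      ((sXX.const_mul (p*t)).add
        (((hasDerivAt_id' x).div_const t).mul sXP)).add
        ((((hasDerivAt_id' x).const_mul 2).mul_const p).mul sXQ)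
    have eJx : pdX (Jop Q) x p t = _ := hJx.deriv
    have hJp : HasDerivAt (fun z => Jop Q x z t) _ p :=
      ((((hasDerivAt_id' p).mul_const t).mul sPX).add
        (sPP.const_mul (x/t))).add
        (((hasDerivAt_id' p).const_mul (2*x)).mul sPQ)
    have eJp : pdP (Jop Q) x p t = _ := hJp.deriv
    have EJ : Jop Q x p t
        = p*t * pdX Q x p t + (x/t) * pdP Q x p t + 2*x*p*Q x p t := rfl
    have cTX := Stmt11Aux.comm_TX hQ (x := x) (p := p) ht
    have cTP := Stmt11Aux.comm_TP hQ (x := x) (p := p) ht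
    have cPX := Stmt11Aux.comm_PX hQ (x := x) (p := p) ht
    have hKx : HasDerivAt (fun z => Kzero Q z p t) _ x :=
      ((sXT.const_mul (2*t)).add ((hasDerivAt_id' x).mul sXX)).sub
        (sXP.const_mul p)
    have eKx : pdX (Kzero Q) x p t = _ := hKx.deriv
    have hKp : HasDerivAt (fun z => Kzero Q x z t) _ p :=
      ((sPT.const_mul (2*t)).add (sPX.const_mul x)).sub
        ((hasDerivAt_id' p).mul sPP)
    have eKp : pdP (Kzero Q) x p t = _ := hKp.deriv
    have EK : Kzero Q x p t
        = 2*t * pdT Q x p t + x * pdX Q x p t - p * pdP Q x p t := rfl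
    show p*t * pdX (Kzero Q) x p t + (x/t) * pdP (Kzero Q) x p t
          + 2*x*p*(Kzero Q x p t)
        = 2*t * pdT (Jop Q) x p t + x * pdX (Jop Q) x p t
          - p * pdP (Jop Q) x p t
    rw [eKx, eKp, eJt, eJx, eJp, EK, cTX, cTP, cPX]
    simp only [Pi.div_apply]
    field_simp
    ring
  ·
    have ht' : t ≠ 0 := ne_of_gt ht
    have sXQ := Stmt11Aux.sliceX hQ (x := x) (p := p) ht
    have sPQ := Stmt11Aux.sliceP hQ (x := x) (p := p) ht
    have sTQ := Stmt11Aux.sliceT hQ (x := x) (p := p) ht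
    have sXT := Stmt11Aux.sliceX hT (x := x) (p := p) ht
    have sPT := Stmt11Aux.sliceP hT (x := x) (p := p) ht
    have sXX := Stmt11Aux.sliceX hXs (x := x) (p := p) ht
    have sPX := Stmt11Aux.sliceP hXs (x := x) (p := p) ht
    have sTX := Stmt11Aux.sliceT hXs (x := x) (p := p) ht
    have sXP := Stmt11Aux.sliceX hPs (x := x) (p := p) ht
    have sPP := Stmt11Aux.sliceP hPs (x := x) (p := p) ht
    have sTP := Stmt11Aux.sliceT hPs (x := x) (p := p) ht
    have hJt : HasDerivAt (fun s => Jop Q x p s) _ t :=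
      ((((hasDerivAt_id' t).const_mul p).mul sTX).add
        (((hasDerivAt_const t x).div (hasDerivAt_id' t) ht').mul sTP)).add
        (sTQ.const_mul (2*x*p))
    have eJt : pdT (Jop Q) x p t = _ := hJt.deriv
    have hJx : HasDerivAt (fun z => Jop Q z p t) _ x :=
      ((sXX.const_mul (p*t)).add
        (((hasDerivAt_id' x).div_const t).mul sXP)).add
        ((((hasDerivAt_id' x).const_mul 2).mul_const p).mul sXQ)
    have eJx : pdX (Jop Q) x p t = _ := hJx.deriv
    have hJp : HasDerivAt (fun z => Jop Q x z t) _ p :=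
      ((((hasDerivAt_id' p).mul_const t).mul sPX).add
        (sPP.const_mul (x/t))).add
        (((hasDerivAt_id' p).const_mul (2*x)).mul sPQ)
    have eJp : pdP (Jop Q) x p t = _ := hJp.deriv
    have EJ : Jop Q x p t
        = p*t * pdX Q x p t + (x/t) * pdP Q x p t + 2*x*p*Q x p t := rfl
    have cTX := Stmt11Aux.comm_TX hQ (x := x) (p := p) ht
    have cTP := Stmt11Aux.comm_TP hQ (x := x) (p := p) ht
    have cPX := Stmt11Aux.comm_PX hQ (x := x) (p := p) ht
    have hKx : HasDerivAt (fun z => Kplus Q z p t) _ x :=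
      ((sXT.const_mul (t^2)).add (((hasDerivAt_id' x).const_mul t).mul sXX)).add
        (((hasDerivAt_pow 2 x).add_const (t/2)).mul sXQ)
    have eKx : pdX (Kplus Q) x p t = _ := hKx.deriv
    have hKp : HasDerivAt (fun z => Kplus Q x z t) _ p :=
      ((sPT.const_mul (t^2)).add (sPX.const_mul (t*x))).add
        (sPQ.const_mul (x^2 + t/2))
    have eKp : pdP (Kplus Q) x p t = _ := hKp.deriv
    have EK : Kplus Q x p t
        = t^2 * pdT Q x p t + t*x * pdX Q x p t + (x^2 + t/2) * Q x p t := rfl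
    show p*t * pdX (Kplus Q) x p t + (x/t) * pdP (Kplus Q) x p t
          + 2*x*p*(Kplus Q x p t)
        = t^2 * pdT (Jop Q) x p t + t*x * pdX (Jop Q) x p t
          + (x^2 + t/2) * (Jop Q x p t)
    rw [eKx, eKp, eJt, eJx, EK, EJ, cTX, cTP, cPX]
    simp only [Pi.div_apply]
    field_simp
    ring
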